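/- Let G(t,r,ν) = b_m + (R/r)·(b_s − b_m)·F(t,r,ν) with F(t,r,ν) = ½ e^{−√(3k)·(r−R)}·[Erfc(√(3k/(4ct))·(r−R) − √(k c t)) + Erfc(√(3k/(4ct))·(r−R) + √(k c t))], where constants k, c, R > 0 and b_m, b_s ∈ ℝ. Then G satisfies the boundary/initial conditions: (i) for every r > R, G(t,r,ν) → b_m as t → 0⁺; (ii) for every t > 0, G(t,r,ν) → b_m as r → ∞; (iii) G(t,R,ν) = b_s for every t > 0. -/

import Mathlib

open Real Filter Topology

/-- The complementary error function `Erfc(x) = 1 − (2/√π)∫₀ˣ e^{−s²} ds`. -/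
noncomputable def Erfc (x : ℝ) : ℝ :=
  1 - (2 / Real.sqrt π) * ∫ s in (0:ℝ)..x, Real.exp (-s ^ 2)

/-- The self-similar profile `F(t,r)` of the exact diffusion solution. -/
noncomputable def diffusionProfile (k c R t r : ℝ) : ℝ :=
  (1 / 2) * Real.exp (-(Real.sqrt (3 * k)) * (r - R)) *
    (Erfc (Real.sqrt (3 * k / (4 * c * t)) * (r - R) - Real.sqrt (k * c * t)) +
     Erfc (Real.sqrt (3 * k / (4 * c * t)) * (r - R) + Real.sqrt (k * c * t)))

/-- The exact incident radiation `G(t,r) = b_m + (R/r)(b_s − b_m) F(t,r)`. -/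
noncomputable def incidentRadiation (k c R bm bs t r : ℝ) : ℝ :=
  bm + (R / r) * (bs - bm) * diffusionProfile k c R t r

/-!
`Erfc` takes values in `[0, 2]`, satisfies `Erfc (-x) + Erfc x = 2` because the Gaussian is even,
and tends to `0` at `+∞` because `∫₀^∞ e^{-s²} = √π / 2`. As `t → 0⁺` with `r > R` both Erfc
arguments of the profile tend to `+∞`, so the profile vanishes; as `r → ∞` the profile stays in
`[0, 2]` while the prefactor `R / r` vanishes; at `r = R` the two Erfc arguments are opposite, so
the profile equals `1`.
-/

theorem integral_exp_neg_sq_neg (x : ℝ) :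
    ∫ s in (0 : ℝ)..-x, exp (-s ^ 2) = -∫ s in (0 : ℝ)..x, exp (-s ^ 2) := by
  have h := intervalIntegral.integral_comp_neg (a := 0) (b := x) fun s : ℝ => exp (-s ^ 2)
  simp only [neg_sq, neg_zero] at h
  rw [intervalIntegral.integral_symm, ← h]

theorem monotone_integral_exp_neg_sq : Monotone fun x : ℝ => ∫ s in (0 : ℝ)..x, exp (-s ^ 2) := by
  intro x y hxy
  have hint : ∀ a b : ℝ, IntervalIntegrable (fun s : ℝ => exp (-s ^ 2)) MeasureTheory.volume a b :=
    fun a b => (by fun_prop : Continuous fun s : ℝ => exp (-s ^ 2)).intervalIntegrable a b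
  rw [← sub_nonneg, intervalIntegral.integral_interval_sub_left (hint 0 y) (hint 0 x)]
  exact intervalIntegral.integral_nonneg hxy fun s _ => (exp_pos _).le

theorem tendsto_integral_exp_neg_sq_atTop :
    Tendsto (fun x : ℝ => ∫ s in (0 : ℝ)..x, exp (-s ^ 2)) atTop (𝓝 (√π / 2)) := by
  have hint : MeasureTheory.IntegrableOn (fun s : ℝ => exp (-s ^ 2)) (Set.Ioi 0) := by
    simpa using (integrable_exp_neg_mul_sq one_pos).integrableOn
  have hval : ∫ s in Set.Ioi (0 : ℝ), exp (-s ^ 2) = √π / 2 := by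
    simpa using integral_gaussian_Ioi 1
  simpa [hval] using MeasureTheory.intervalIntegral_tendsto_integral_Ioi 0 hint tendsto_id

theorem integral_exp_neg_sq_le (x : ℝ) : ∫ s in (0 : ℝ)..x, exp (-s ^ 2) ≤ √π / 2 :=
  monotone_integral_exp_neg_sq.ge_of_tendsto tendsto_integral_exp_neg_sq_atTop x

theorem Erfc_neg_add_Erfc (x : ℝ) : Erfc (-x) + Erfc x = 2 := by
  rw [Erfc, Erfc, integral_exp_neg_sq_neg]
  ring

theorem Erfc_nonneg (x : ℝ) : 0 ≤ Erfc x := by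
  have hπ : 0 < √π := sqrt_pos.2 pi_pos
  rw [Erfc, sub_nonneg, div_mul_eq_mul_div, div_le_one hπ]
  linarith [integral_exp_neg_sq_le x]

theorem Erfc_le_two (x : ℝ) : Erfc x ≤ 2 := by
  linarith [Erfc_neg_add_Erfc x, Erfc_nonneg (-x)]

theorem tendsto_Erfc_atTop : Tendsto Erfc atTop (𝓝 0) := by
  have h := (tendsto_integral_exp_neg_sq_atTop.const_mul (2 / √π)).const_sub 1
  have hlim : 1 - 2 / √π * (√π / 2) = 0 := by
    field_simp
    norm_num
  rw [hlim] at h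
  exact h

theorem tendsto_sqrt_div_mul_nhdsGT_zero {a b : ℝ} (ha : 0 < a) (hb : 0 < b) :
    Tendsto (fun t => √(a / (b * t))) (𝓝[>] 0) atTop := by
  refine tendsto_sqrt_atTop.comp ((tendsto_inv_nhdsGT_zero.const_mul_atTop (div_pos ha hb)).congr
    fun t => ?_)
  rw [← div_eq_mul_inv, div_div]

theorem tendsto_diffusionProfile_nhdsGT_zero {k c R r : ℝ} (hk : 0 < k) (hc : 0 < c)
    (hr : R < r) : Tendsto (fun t => diffusionProfile k c R t r) (𝓝[>] 0) (𝓝 0) := by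
  have hgrow : Tendsto (fun t => √(3 * k / (4 * c * t)) * (r - R)) (𝓝[>] 0) atTop :=
    (tendsto_sqrt_div_mul_nhdsGT_zero (by positivity) (by positivity)).atTop_mul_const
      (sub_pos.2 hr)
  have hshift : Tendsto (fun t => √(k * c * t)) (𝓝[>] 0) (𝓝 0) := by
    have h : Continuous fun t => √(k * c * t) := by fun_prop
    simpa using (h.tendsto 0).mono_left nhdsWithin_le_nhds
  have hsum := (tendsto_Erfc_atTop.comp (hgrow.atTop_add hshift.neg)).add
    (tendsto_Erfc_atTop.comp (hgrow.atTop_add hshift))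
  simpa [diffusionProfile, ← sub_eq_add_neg, mul_assoc] using hsum.const_mul
    ((1 / 2) * exp (-√(3 * k) * (r - R)))

theorem diffusionProfile_mem_Icc {k c R t r : ℝ} (hr : R ≤ r) :
    diffusionProfile k c R t r ∈ Set.Icc 0 2 := by
  set E := exp (-√(3 * k) * (r - R))
  have hE : E ≤ 1 := exp_le_one_iff.2 <|
    mul_nonpos_of_nonpos_of_nonneg (neg_nonpos.2 (sqrt_nonneg _)) (sub_nonneg.2 hr)
  set x := √(3 * k / (4 * c * t)) * (r - R)
  set y := √(k * c * t)
  have hsum₀ : 0 ≤ Erfc (x - y) + Erfc (x + y) := add_nonneg (Erfc_nonneg _) (Erfc_nonneg _)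
  have hsum₄ : Erfc (x - y) + Erfc (x + y) ≤ 4 := by
    linarith [Erfc_le_two (x - y), Erfc_le_two (x + y)]
  refine ⟨mul_nonneg (by positivity) hsum₀, ?_⟩
  calc 1 / 2 * E * (Erfc (x - y) + Erfc (x + y)) ≤ 1 / 2 * 1 * 4 := by gcongr
    _ = 2 := by norm_num

theorem diffusionProfile_self (k c R t : ℝ) : diffusionProfile k c R t R = 1 := by
  simp only [diffusionProfile, sub_self, mul_zero, exp_zero, zero_sub, zero_add,
    Erfc_neg_add_Erfc]
  norm_num

/-- The exact diffusion solution satisfies the initial and boundary conditions: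
(i) `G(t,r) → b_m` as `t → 0⁺` for `r > R`; (ii) `G(t,r) → b_m` as `r → ∞` for `t > 0`;
(iii) `G(t,R) = b_s` for `t > 0`. -/
theorem incidentRadiation_initial_boundary_conditions
    (k c R bm bs : ℝ) (hk : 0 < k) (hc : 0 < c) (hR : 0 < R) :
    (∀ r, R < r →
      Tendsto (fun t => incidentRadiation k c R bm bs t r)
        (nhdsWithin 0 (Set.Ioi 0)) (nhds bm)) ∧
    (∀ t, 0 < t →
      Tendsto (fun r => incidentRadiation k c R bm bs t r) atTop (nhds bm)) ∧
    (∀ t, 0 < t → incidentRadiation k c R bm bs t R = bs) := by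
  refine ⟨fun r hr => ?_, fun t _ => ?_, fun t _ => ?_⟩
  · simpa [incidentRadiation] using ((tendsto_diffusionProfile_nhdsGT_zero hk hc hr).const_mul
      (R / r * (bs - bm))).const_add bm
  · have hdecay : Tendsto (fun r => R / r * (bs - bm)) atTop (𝓝 0) := by
      simpa using (tendsto_const_nhds.div_atTop tendsto_id).mul_const (bs - bm)
    have hbdd : IsBoundedUnder (· ≤ ·) atTop fun r => ‖diffusionProfile k c R t r‖ :=
      isBoundedUnder_of_eventually_le (a := 2) <| (eventually_ge_atTop R).mono fun r hr => by
        obtain ⟨h₀, h₂⟩ := diffusionProfile_mem_Icc (k := k) (c := c) (t := t) hr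
        rwa [Real.norm_of_nonneg h₀]
    simpa [incidentRadiation] using (hdecay.zero_mul_isBoundedUnder_le hbdd).const_add bm
  · rw [incidentRadiation, diffusionProfile_self, div_self hR.ne']
    ring
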